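/- Suppose either (a) n' ≥ n and n' ≡ n (mod 2), or (b) n' = 2r'+1 is odd, n = 2r is even, and n' ≥ n. Then there exists an idempotent e ∈ S^B_{Q,q}(n',d) such that e S^B_{Q,q}(n',d) e is isomorphic to S^B_{Q,q}(n,d) as a K-algebra. -/

import Mathlib

/-!
Since `I(n) ⊆ I(n')` and `I(n)` is closed under negation, the tuples with all entries in `I(n)`
are permuted among themselves by the index operations behind `T_0, …, T_{d-1}` (negating an
entry, swapping neighbours), and so are the remaining tuples. Hence the inclusion
`ι : V(n)^{⊗d} → V(n')^{⊗d}` and the coordinate projection `π` back are both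
`H^B_{Q,q}(d)`-linear, with `π ι = 1`. Then `e = ι π` is an idempotent of `S^B_{Q,q}(n',d)`, and
`x ↦ ι x π` is an isomorphism of `S^B_{Q,q}(n,d)` onto `e S^B_{Q,q}(n',d) e`, with inverse
`a ↦ π a ι`.
-/

set_option maxHeartbeats 1000000
set_option synthInstance.maxHeartbeats 1000000
open scoped TensorProduct
open scoped Classical

noncomputable section

/-- The index set `I(n)`: the integers in `[-⌊n/2⌋, ⌊n/2⌋]`, with `0` excluded when `n` is even. -/
def IFin (n : ℕ) : Finset ℤ :=
  (Finset.Icc (-((n / 2 : ℕ) : ℤ)) ((n / 2 : ℕ) : ℤ)).filter fun i => i ≠ 0 ∨ n % 2 = 1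

lemma neg_mem_IFin {n : ℕ} {i : ℤ} (h : i ∈ IFin n) : -i ∈ IFin n := by
  simp only [IFin, Finset.mem_filter, Finset.mem_Icc] at h ⊢
  rcases h with ⟨⟨h1, h2⟩, h3⟩
  refine ⟨⟨by omega, by omega⟩, ?_⟩
  rcases h3 with h3 | h3
  · exact Or.inl (by omega)
  · exact Or.inr h3

/-- Negation on the index set. -/
def negI (n : ℕ) (i : ↥(IFin n)) : ↥(IFin n) := ⟨-(i : ℤ), neg_mem_IFin i.2⟩

variable (K : Type) [Field K] (Q q : K) (n d : ℕ)

/-- The tensor space `V(n)^{⊗ d}`, realized as the free `K`-module on the set of `d`-tuples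
of elements of `I(n)`; the tuple `μ` corresponds to the basis vector `v_μ`. -/
def TSp : Type := (Fin d → ↥(IFin n)) →₀ K

instance : AddCommGroup (TSp K n d) :=
  inferInstanceAs (AddCommGroup ((Fin d → ↥(IFin n)) →₀ K))

instance : Module K (TSp K n d) :=
  inferInstanceAs (Module K ((Fin d → ↥(IFin n)) →₀ K))

/-- The basis vector `v_μ` of the tensor space. -/
def bs (μ : Fin d → ↥(IFin n)) : TSp K n d := Finsupp.single μ 1

/-- The value of the right action of the Hecke generator `T_t` (for `t = 0` this is `T_0`,
for `t ≥ 1` it is the type A generator acting on the tensor positions `t-1, t` (0-indexed)). -/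
def preT (t : Fin d) (μ : Fin d → ↥(IFin n)) : TSp K n d :=
  if (t : ℕ) = 0 then
    if 0 < ((μ t : ℤ)) then bs K n d (Function.update μ t (negI n (μ t)))
    else if ((μ t : ℤ)) = 0 then Q⁻¹ • bs K n d μ
    else bs K n d (Function.update μ t (negI n (μ t))) + (Q⁻¹ - Q) • bs K n d μ
  else
    let p : Fin d := ⟨(t : ℕ) - 1, Nat.lt_of_le_of_lt (Nat.sub_le _ _) t.isLt⟩
    if ((μ p : ℤ)) < ((μ t : ℤ)) then bs K n d (μ ∘ Equiv.swap p t)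
    else if ((μ p : ℤ)) = ((μ t : ℤ)) then q⁻¹ • bs K n d μ
    else bs K n d (μ ∘ Equiv.swap p t) + (q⁻¹ - q) • bs K n d μ

/-- The operator on the tensor space given by the right action of the Hecke generator `T_t`. -/
def Tact (t : Fin d) : Module.End K (TSp K n d) :=
  Finsupp.lift (TSp K n d) K (Fin d → ↥(IFin n)) (preT K Q q n d t)

/-- The right action operator of `T_t` for a natural number index, the identity out of range. -/
def Tact' (t : ℕ) : Module.End K (TSp K n d) :=
  if h : t < d then Tact K Q q n d ⟨t, h⟩ else 1

/-- The type B `q`-Schur algebra `S^B_{Q,q}(n,d) = End_{H^B_{Q,q}(d)}(V(n)^{⊗d})`, realized as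
the centralizer of the operators giving the right action of the generators `T_0, …, T_{d-1}`. -/
def SchurB : Subalgebra K (Module.End K (TSp K n d)) :=
  Subalgebra.centralizer K (Set.range (Tact K Q q n d))

/-- The type A `q`-Schur algebra `S^A_q(m,i) = End_{H_q(Σ_i)}(V(m)^{⊗i})`, realized as the
centralizer of the operators giving the right action of the generators `T_1, …, T_{i-1}`. -/
def SchurA (m i : ℕ) : Subalgebra K (Module.End K (TSp K m i)) :=
  Subalgebra.centralizer K {f | ∃ t : Fin i, (t : ℕ) ≠ 0 ∧ f = Tact K q q m i t}

/-- The polynomial `f^B_d(Q,q) = ∏_{i=1-d}^{d-1} (Q⁻² + q^{2i})`. -/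
def fB : K := ∏ i ∈ Finset.Icc (1 - (d : ℤ)) ((d : ℤ) - 1), (Q⁻¹ ^ 2 + q ^ (2 * i))

section Corner

variable {R M N τ : Type*} [CommSemiring R] [AddCommMonoid M] [Module R M]
  [AddCommMonoid N] [Module R N] {A : τ → Module.End R M} {B : τ → Module.End R N}

lemma mem_centralizer_range_iff {f : Module.End R M} :
    f ∈ Subalgebra.centralizer R (Set.range A) ↔ ∀ t, A t ∘ₗ f = f ∘ₗ A t := by
  simp only [Subalgebra.mem_centralizer_iff, Set.forall_mem_range, Module.End.mul_eq_comp]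

variable (i : M →ₗ[R] N) (p : N →ₗ[R] M)

lemma comp_comp_mem_centralizer_range (hi : ∀ t, B t ∘ₗ i = i ∘ₗ A t)
    (hp : ∀ t, p ∘ₗ B t = A t ∘ₗ p) {x : Module.End R M}
    (hx : x ∈ Subalgebra.centralizer R (Set.range A)) :
    i ∘ₗ x ∘ₗ p ∈ Subalgebra.centralizer R (Set.range B) := by
  rw [mem_centralizer_range_iff] at hx ⊢
  intro t
  calc B t ∘ₗ i ∘ₗ x ∘ₗ p = i ∘ₗ (A t ∘ₗ x) ∘ₗ p := by
        rw [← LinearMap.comp_assoc, hi]; rfl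
    _ = (i ∘ₗ x ∘ₗ p) ∘ₗ B t := by
      rw [hx]; simp only [LinearMap.comp_assoc, hp]

section Conj

variable (hi : ∀ t, B t ∘ₗ i = i ∘ₗ A t) (hp : ∀ t, p ∘ₗ B t = A t ∘ₗ p)

def centralizerConj :
    Subalgebra.centralizer R (Set.range A) →ₗ[R] Subalgebra.centralizer R (Set.range B) where
  toFun x := ⟨i ∘ₗ x.1 ∘ₗ p, comp_comp_mem_centralizer_range i p hi hp x.2⟩
  map_add' x y := by ext; simp
  map_smul' c x := by ext; simp

lemma coe_centralizerConj (x : Subalgebra.centralizer R (Set.range A)) :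
    (centralizerConj i p hi hp x : Module.End R N) = i ∘ₗ x.1 ∘ₗ p := rfl

lemma centralizerConj_mul (hpi : p ∘ₗ i = LinearMap.id)
    (x y : Subalgebra.centralizer R (Set.range A)) :
    centralizerConj i p hi hp (x * y) =
      centralizerConj i p hi hp x * centralizerConj i p hi hp y := by
  apply Subtype.ext
  simp only [Subalgebra.coe_mul, coe_centralizerConj, Module.End.mul_eq_comp,
    LinearMap.comp_assoc]
  rw [← LinearMap.comp_assoc _ i p, hpi, LinearMap.id_comp]

lemma comp_centralizerConj_comp (hpi : p ∘ₗ i = LinearMap.id)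
    (x : Subalgebra.centralizer R (Set.range A)) :
    p ∘ₗ (centralizerConj i p hi hp x : Module.End R N) ∘ₗ i = x := by
  rw [coe_centralizerConj]
  simp only [LinearMap.comp_assoc]
  rw [hpi, LinearMap.comp_id, ← LinearMap.comp_assoc, hpi, LinearMap.id_comp]

end Conj

theorem exists_corner_centralizer_of_retract (hpi : p ∘ₗ i = LinearMap.id)
    (hi : ∀ t, B t ∘ₗ i = i ∘ₗ A t) (hp : ∀ t, p ∘ₗ B t = A t ∘ₗ p) :
    ∃ e : Subalgebra.centralizer R (Set.range B), IsIdempotentElem e ∧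
      ∃ φ : Subalgebra.centralizer R (Set.range A) →ₗ[R] Subalgebra.centralizer R (Set.range B),
        Function.Injective φ ∧ (∀ x y, φ (x * y) = φ x * φ y) ∧ φ 1 = e ∧
        (∀ a, a ∈ LinearMap.range φ ↔ e * a * e = a) := by
  set φ := centralizerConj i p hi hp
  have φ_mul := centralizerConj_mul i p hi hp hpi
  refine ⟨φ 1, by rw [IsIdempotentElem, ← φ_mul, mul_one], φ, fun x y hxy => ?_, φ_mul, rfl,
    fun a => ⟨?_, fun ha => ?_⟩⟩
  · apply Subtype.ext
    rw [← comp_centralizerConj_comp i p hi hp hpi x, ← comp_centralizerConj_comp i p hi hp hpi y,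
      hxy]
  · rintro ⟨x, rfl⟩
    rw [← φ_mul, ← φ_mul, one_mul, mul_one]
  · refine ⟨⟨p ∘ₗ a.1 ∘ₗ i,
      comp_comp_mem_centralizer_range p i (fun t => (hp t).symm) (fun t => (hi t).symm) a.2⟩, ?_⟩
    conv_rhs => rw [← ha]
    apply Subtype.ext
    simp only [φ, Subalgebra.coe_mul, coe_centralizerConj, Module.End.mul_eq_comp,
      OneMemClass.coe_one, Module.End.one_eq_id, LinearMap.comp_assoc, LinearMap.id_comp]

end Corner

section TensorSpace

variable {n} {n' : ℕ}

lemma neg_mem_IFin_iff {i : ℤ} : -i ∈ IFin n ↔ i ∈ IFin n :=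
  ⟨fun h => neg_neg i ▸ neg_mem_IFin h, neg_mem_IFin⟩

lemma IFin_subset_IFin (hle : n ≤ n') (hodd : n % 2 = 1 → n' % 2 = 1) : IFin n ⊆ IFin n' := by
  intro i hi
  simp only [IFin, Finset.mem_filter, Finset.mem_Icc] at hi ⊢
  omega

variable (hsub : IFin n ⊆ IFin n')

def tupleIncl (μ : Fin d → IFin n) : Fin d → IFin n' := fun s => ⟨μ s, hsub (μ s).2⟩

-- Not an `rfl` proof on purpose: `simp` would then apply it as a `dsimp` lemma, rewriting the
-- conditions of the `if`s in `preT` but not their `Decidable` instances.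
lemma coe_tupleIncl_apply (μ : Fin d → IFin n) (s : Fin d) :
    (tupleIncl d hsub μ s : ℤ) = μ s :=
  Subtype.coe_mk _ _

lemma tupleIncl_injective : Function.Injective (tupleIncl d hsub) :=
  fun _ _ h => funext fun s => Subtype.ext (congrArg (fun ν => (ν s : ℤ)) h)

lemma mem_range_tupleIncl_iff {ν : Fin d → IFin n'} :
    ν ∈ Set.range (tupleIncl d hsub) ↔ ∀ s, (ν s : ℤ) ∈ IFin n :=
  ⟨by rintro ⟨μ, rfl⟩ s; exact (μ s).2, fun h => ⟨fun s => ⟨ν s, h s⟩, rfl⟩⟩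

lemma tupleIncl_update_negI (μ : Fin d → IFin n) (t : Fin d) :
    tupleIncl d hsub (Function.update μ t (negI n (μ t))) =
      Function.update (tupleIncl d hsub μ) t (negI n' (tupleIncl d hsub μ t)) := by
  funext s
  rcases eq_or_ne s t with rfl | hs
  · simp [tupleIncl, negI]
  · simp [tupleIncl, hs]

lemma tupleIncl_comp (μ : Fin d → IFin n) (σ : Equiv.Perm (Fin d)) :
    tupleIncl d hsub (μ ∘ σ) = tupleIncl d hsub μ ∘ σ := rfl

lemma update_negI_mem_range_tupleIncl_iff {ν : Fin d → IFin n'} {t : Fin d} :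
    Function.update ν t (negI n' (ν t)) ∈ Set.range (tupleIncl d hsub) ↔
      ν ∈ Set.range (tupleIncl d hsub) := by
  simp only [mem_range_tupleIncl_iff]
  refine forall_congr' fun s => ?_
  rcases eq_or_ne s t with rfl | hs
  · simp [negI, neg_mem_IFin_iff]
  · simp [hs]

lemma comp_mem_range_tupleIncl_iff {ν : Fin d → IFin n'} (σ : Equiv.Perm (Fin d)) :
    ν ∘ σ ∈ Set.range (tupleIncl d hsub) ↔ ν ∈ Set.range (tupleIncl d hsub) := by
  simp only [mem_range_tupleIncl_iff, Function.comp_apply]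
  exact σ.forall_congr_right (q := fun s => (ν s : ℤ) ∈ IFin n)

lemma TSp.hom_ext {M : Type*} [AddCommMonoid M] [Module K M] {f g : TSp K n d →ₗ[K] M}
    (h : ∀ μ, f (bs K n d μ) = g (bs K n d μ)) : f = g :=
  Finsupp.lhom_ext' fun μ => LinearMap.ext_ring (h μ)

lemma Tact_bs (t : Fin d) (μ : Fin d → IFin n) :
    Tact K Q q n d t (bs K n d μ) = preT K Q q n d t μ := by
  change Finsupp.lift (TSp K n d) K _ (preT K Q q n d t) (Finsupp.single μ 1) = _
  simp

def tensorIncl : TSp K n d →ₗ[K] TSp K n' d := Finsupp.lmapDomain K K (tupleIncl d hsub)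

def tensorRestr : TSp K n' d →ₗ[K] TSp K n d :=
  Finsupp.lcomapDomain (tupleIncl d hsub) (tupleIncl_injective d hsub)

lemma tensorIncl_bs (μ : Fin d → IFin n) :
    tensorIncl K d hsub (bs K n d μ) = bs K n' d (tupleIncl d hsub μ) :=
  Finsupp.mapDomain_single

lemma tensorRestr_bs_tupleIncl (μ : Fin d → IFin n) :
    tensorRestr K d hsub (bs K n' d (tupleIncl d hsub μ)) = bs K n d μ :=
  Finsupp.comapDomain_single _ _ _ _

lemma tensorRestr_bs_of_notMem_range {ν : Fin d → IFin n'}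
    (hν : ν ∉ Set.range (tupleIncl d hsub)) : tensorRestr K d hsub (bs K n' d ν) = 0 :=
  Finsupp.comapDomain_single_of_not_mem_range hν _ _

lemma tensorRestr_comp_tensorIncl : tensorRestr K d hsub ∘ₗ tensorIncl K d hsub = LinearMap.id :=
  TSp.hom_ext K d fun μ => by simp [tensorIncl_bs, tensorRestr_bs_tupleIncl]

lemma tensorRestr_tensorIncl (v : TSp K n d) : tensorRestr K d hsub (tensorIncl K d hsub v) = v :=
  LinearMap.congr_fun (tensorRestr_comp_tensorIncl K d hsub) v

lemma preT_tupleIncl (t : Fin d) (μ : Fin d → IFin n) :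
    preT K Q q n' d t (tupleIncl d hsub μ) = tensorIncl K d hsub (preT K Q q n d t μ) := by
  unfold preT
  simp only [coe_tupleIncl_apply]
  split_ifs <;>
    simp only [map_add, map_smul, tensorIncl_bs, tupleIncl_update_negI, tupleIncl_comp]

lemma tensorRestr_preT_of_notMem_range (t : Fin d) {ν : Fin d → IFin n'}
    (hν : ν ∉ Set.range (tupleIncl d hsub)) : tensorRestr K d hsub (preT K Q q n' d t ν) = 0 := by
  have hupd : Function.update ν t (negI n' (ν t)) ∉ Set.range (tupleIncl d hsub) := by
    rwa [update_negI_mem_range_tupleIncl_iff]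
  have hswap (σ : Equiv.Perm (Fin d)) : ν ∘ σ ∉ Set.range (tupleIncl d hsub) := by
    rwa [comp_mem_range_tupleIncl_iff]
  unfold preT
  dsimp only
  split_ifs <;>
    simp only [map_add, map_smul, smul_zero, add_zero, tensorRestr_bs_of_notMem_range K d hsub hν,
      tensorRestr_bs_of_notMem_range K d hsub hupd,
      tensorRestr_bs_of_notMem_range K d hsub (hswap _)]

lemma Tact_comp_tensorIncl (t : Fin d) :
    Tact K Q q n' d t ∘ₗ tensorIncl K d hsub = tensorIncl K d hsub ∘ₗ Tact K Q q n d t :=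
  TSp.hom_ext K d fun μ => by simp [tensorIncl_bs, Tact_bs, preT_tupleIncl]

lemma tensorRestr_comp_Tact (t : Fin d) :
    tensorRestr K d hsub ∘ₗ Tact K Q q n' d t = Tact K Q q n d t ∘ₗ tensorRestr K d hsub := by
  refine TSp.hom_ext K d fun ν => ?_
  by_cases hν : ν ∈ Set.range (tupleIncl d hsub)
  · obtain ⟨μ, rfl⟩ := hν
    simp [Tact_bs, preT_tupleIncl, tensorRestr_bs_tupleIncl, tensorRestr_tensorIncl]
  · simp [Tact_bs, tensorRestr_preT_of_notMem_range K Q q d hsub t hν,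
      tensorRestr_bs_of_notMem_range K d hsub hν]

end TensorSpace

theorem schurB_corner_schurB (n' : ℕ)
    (hcase : (n ≤ n' ∧ n' % 2 = n % 2) ∨ (n ≤ n' ∧ n' % 2 = 1 ∧ n % 2 = 0)) :
    ∃ e : ↥(SchurB K Q q n' d), IsIdempotentElem e ∧
      ∃ φ : ↥(SchurB K Q q n d) →ₗ[K] ↥(SchurB K Q q n' d),
        Function.Injective φ ∧ (∀ x y, φ (x * y) = φ x * φ y) ∧ φ 1 = e ∧
        (∀ a : ↥(SchurB K Q q n' d), a ∈ LinearMap.range φ ↔ e * a * e = a) := by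
  have hsub : IFin n ⊆ IFin n' := IFin_subset_IFin (by omega) (by omega)
  exact exists_corner_centralizer_of_retract _ _ (tensorRestr_comp_tensorIncl K d hsub)
    (Tact_comp_tensorIncl K Q q d hsub) (tensorRestr_comp_Tact K Q q d hsub)

end
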